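/- arXiv:2306.00127 — 3 statements merged into one kernel-verified Lean document; each statement's English description precedes it below -/
import Mathlib

section
/- Let {w_t}_{t=0}^T and {w'_t}_{t=0}^T be sequences in ℝᵖ with w_0 = w'_0, w_{t+1} = w_t − η(∇ℓ(w_t) + ε_t), and w'_{t+1} = w'_t − η∇ℓ(w'_t), where η > 0 and ∇ℓ is β-Lipschitz. Then ‖w_T − w'_T‖ ≤ η‖Σ_{t=0}^{T−1} ε_t‖ + Σ_{s=0}^{T−2} η²β(1 + ηβ)^{T−2−s} ‖Σ_{t=0}^{s} ε_t‖. -/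
/-!
Compare the SGD path with the GD path after moving the accumulated noise to the SGD side: the
gap `d n = w n - w' n + η • ∑_{t<n} ε t` vanishes at `n = 0, 1` and changes in one step by
`η • (∇ℓ (w n) - ∇ℓ (w' n))`. Since `‖w n - w' n‖ ≤ ‖d n‖ + η ‖∑_{t<n} ε t‖`, the Lipschitz bound
gives `‖d (n+1)‖ ≤ (1 + ηβ) ‖d n‖ + η²β ‖∑_{t<n} ε t‖`, and the discrete Grönwall inequality
unrolls this recursion.
-/

open Finset

lemma le_sum_pow_mul_of_le_mul_add {u b : ℕ → ℝ} {q : ℝ} (hq : 0 ≤ q) (hu₀ : u 0 ≤ 0)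
    (hu₁ : u 1 ≤ 0) (hu : ∀ n ≥ 1, u (n + 1) ≤ q * u n + b n) (n : ℕ) :
    u n ≤ ∑ s ∈ range (n - 1), q ^ (n - 2 - s) * b (s + 1) := by
  rcases Nat.eq_zero_or_pos n with rfl | hn
  · simpa using hu₀
  calc u n ≤ u 1 * ∏ i ∈ Ico 1 n, q + ∑ k ∈ Ico 1 n, b k * ∏ i ∈ Ico (k + 1) n, q :=
        discrete_gronwall_prod_general hu (fun _ _ ↦ hq) hn
    _ ≤ ∑ k ∈ Ico 1 n, b k * ∏ i ∈ Ico (k + 1) n, q :=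
        add_le_of_nonpos_left (mul_nonpos_of_nonpos_of_nonneg hu₁ (prod_nonneg fun _ _ ↦ hq))
    _ = ∑ s ∈ range (n - 1), q ^ (n - 2 - s) * b (s + 1) := by
        rw [sum_Ico_eq_sum_range]
        refine sum_congr rfl fun s _ ↦ ?_
        rw [prod_const, Nat.card_Ico, add_comm 1 s, mul_comm]
        congr 2
        omega

lemma nonneg_of_norm_sub_le_mul_norm_sub {E F : Type*} [NormedAddCommGroup E] [Nontrivial E]
    [SeminormedAddCommGroup F] {f : E → F} {β : ℝ} (h : ∀ a b, ‖f a - f b‖ ≤ β * ‖a - b‖) :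
    0 ≤ β := by
  obtain ⟨a, b, hab⟩ := exists_pair_ne E
  have hpos : 0 < ‖a - b‖ := norm_pos_iff.mpr (sub_ne_zero.mpr hab)
  exact nonneg_of_mul_nonneg_left ((norm_nonneg _).trans (h a b)) hpos

section NoisyIteration

variable {E : Type*} [NormedAddCommGroup E] [NormedSpace ℝ E] {g : E → E} {β η : ℝ}
  {w w' ε : ℕ → E}

lemma noisy_gap_succ (hw : ∀ t, w (t + 1) = w t - η • (g (w t) + ε t))
    (hw' : ∀ t, w' (t + 1) = w' t - η • g (w' t)) (n : ℕ) :
    w (n + 1) - w' (n + 1) + η • ∑ t ∈ range (n + 1), ε t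
      = (w n - w' n + η • ∑ t ∈ range n, ε t) - η • (g (w n) - g (w' n)) := by
  rw [hw, hw', sum_range_succ, smul_add, smul_add, smul_sub]
  abel

lemma norm_noisy_gap_succ_le (hη : 0 ≤ η) (hβ : 0 ≤ β)
    (hlip : ∀ a b, ‖g a - g b‖ ≤ β * ‖a - b‖)
    (hw : ∀ t, w (t + 1) = w t - η • (g (w t) + ε t))
    (hw' : ∀ t, w' (t + 1) = w' t - η • g (w' t)) (n : ℕ) :
    ‖w (n + 1) - w' (n + 1) + η • ∑ t ∈ range (n + 1), ε t‖
      ≤ (1 + η * β) * ‖w n - w' n + η • ∑ t ∈ range n, ε t‖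
        + η ^ 2 * β * ‖∑ t ∈ range n, ε t‖ := by
  rw [noisy_gap_succ hw hw' n]
  set S := ∑ t ∈ range n, ε t
  set d := w n - w' n + η • S
  have hgap : ‖w n - w' n‖ ≤ ‖d‖ + η * ‖S‖ := by
    simpa [d, norm_smul, abs_of_nonneg hη] using norm_sub_le d (η • S)
  calc ‖d - η • (g (w n) - g (w' n))‖
      ≤ ‖d‖ + η * ‖g (w n) - g (w' n)‖ := by
        simpa [norm_smul, abs_of_nonneg hη] using norm_sub_le d (η • (g (w n) - g (w' n)))
    _ ≤ ‖d‖ + η * (β * (‖d‖ + η * ‖S‖)) := by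
        gcongr
        exact (hlip _ _).trans (by gcongr)
    _ = (1 + η * β) * ‖d‖ + η ^ 2 * β * ‖S‖ := by ring

theorem norm_sub_le_of_noisy_iteration (hη : 0 ≤ η) (hβ : 0 ≤ β)
    (hlip : ∀ a b, ‖g a - g b‖ ≤ β * ‖a - b‖) (h0 : w 0 = w' 0)
    (hw : ∀ t, w (t + 1) = w t - η • (g (w t) + ε t))
    (hw' : ∀ t, w' (t + 1) = w' t - η • g (w' t)) (T : ℕ) :
    ‖w T - w' T‖ ≤ η * ‖∑ t ∈ range T, ε t‖
      + ∑ s ∈ range (T - 1),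
          η ^ 2 * β * (1 + η * β) ^ (T - 2 - s) * ‖∑ t ∈ range (s + 1), ε t‖ := by
  set S := fun n ↦ ∑ t ∈ range n, ε t
  have hrec := norm_noisy_gap_succ_le hη hβ hlip hw hw'
  have hgap := le_sum_pow_mul_of_le_mul_add (u := fun n ↦ ‖w n - w' n + η • S n‖)
    (b := fun n ↦ η ^ 2 * β * ‖S n‖) (by positivity) (by simp [S, h0])
    (by simpa [S, h0] using hrec 0) (fun n _ ↦ hrec n) T
  calc ‖w T - w' T‖ ≤ ‖w T - w' T + η • S T‖ + η * ‖S T‖ := by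
        simpa [norm_smul, abs_of_nonneg hη] using norm_sub_le (w T - w' T + η • S T) (η • S T)
    _ ≤ _ := by
        rw [add_comm]
        gcongr
        refine hgap.trans_eq (sum_congr rfl fun s _ ↦ ?_)
        ring

end NoisyIteration

theorem stmt_4_general {p : ℕ} (ℓ : EuclideanSpace ℝ (Fin p) → ℝ) (β η : ℝ) (hη : 0 < η)
    (hlip : ∀ a b : EuclideanSpace ℝ (Fin p),
      ‖gradient ℓ a - gradient ℓ b‖ ≤ β * ‖a - b‖)
    (T : ℕ) (w w' : ℕ → EuclideanSpace ℝ (Fin p)) (ε : ℕ → EuclideanSpace ℝ (Fin p))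
    (h0 : w 0 = w' 0)
    (hw : ∀ t, w (t + 1) = w t - η • (gradient ℓ (w t) + ε t))
    (hw' : ∀ t, w' (t + 1) = w' t - η • gradient ℓ (w' t)) :
    ‖w T - w' T‖ ≤ η * ‖∑ t ∈ Finset.range T, ε t‖
      + ∑ s ∈ Finset.range (T - 1),
          η ^ 2 * β * (1 + η * β) ^ (T - 2 - s) * ‖∑ t ∈ Finset.range (s + 1), ε t‖ := by
  rcases subsingleton_or_nontrivial (EuclideanSpace ℝ (Fin p)) with hE | hE
  · simp [Subsingleton.elim (w T) (w' T), Subsingleton.elim (∑ t ∈ range _, ε t) 0]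
  exact norm_sub_le_of_noisy_iteration hη.le (nonneg_of_norm_sub_le_mul_norm_sub hlip) hlip h0
    hw hw' T

/-- Lemma C.3 of the paper: distance between an SGD path and the corresponding GD path. -/
theorem stmt_4 {p : ℕ} (ℓ : EuclideanSpace ℝ (Fin p) → ℝ) (β η : ℝ) (hη : 0 < η)
    (hdiff : Differentiable ℝ ℓ)
    (hlip : ∀ a b : EuclideanSpace ℝ (Fin p),
      ‖gradient ℓ a - gradient ℓ b‖ ≤ β * ‖a - b‖)
    (T : ℕ) (w w' : ℕ → EuclideanSpace ℝ (Fin p)) (ε : ℕ → EuclideanSpace ℝ (Fin p))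
    (h0 : w 0 = w' 0)
    (hw : ∀ t, w (t + 1) = w t - η • (gradient ℓ (w t) + ε t))
    (hw' : ∀ t, w' (t + 1) = w' t - η • gradient ℓ (w' t)) :
    ‖w T - w' T‖ ≤ η * ‖∑ t ∈ Finset.range T, ε t‖
      + ∑ s ∈ Finset.range (T - 1),
          η ^ 2 * β * (1 + η * β) ^ (T - 2 - s) * ‖∑ t ∈ Finset.range (s + 1), ε t‖ :=
  stmt_4_general ℓ β η hη hlip T w w' ε h0 hw hw'
end

section
/- Let {w_t}_{t=0}^T be points in ℝᵖ and P⊥ an orthogonal projection. Let ℓ : ℝᵖ → ℝ be L-Lipschitz and suppose the per-step projections satisfy ‖P⊥(w_{t+1} − w_t)‖² ≤ G²·(ℓ(w_t) − ℓ(w_{t+1})) for all t, where ℓ(w_t) is nonincreasing in t and ℓ(w_0) > ℓ(w_T). Then ‖P⊥(w_T − w_0)‖²/‖w_T − w_0‖² ≤ T·G²·L²/(ℓ(w_0) − ℓ(w_T)). -/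
/-- Bound on the out-of-subspace fraction of the total weight update. -/
theorem stmt_8 {p : ℕ} (K : Submodule ℝ (EuclideanSpace ℝ (Fin p)))
    (ℓ : EuclideanSpace ℝ (Fin p) → ℝ) (L G : ℝ)
    (hlip : ∀ w v : EuclideanSpace ℝ (Fin p), |ℓ w - ℓ v| ≤ L * ‖w - v‖)
    (T : ℕ) (w : ℕ → EuclideanSpace ℝ (Fin p))
    (hstep : ∀ t < T, ‖(K.orthogonalProjectionOnto (w (t + 1) - w t) :
        EuclideanSpace ℝ (Fin p))‖ ^ 2 ≤ G ^ 2 * (ℓ (w t) - ℓ (w (t + 1))))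
    (hmono : ∀ s t, s ≤ t → t ≤ T → ℓ (w t) ≤ ℓ (w s))
    (hdec : ℓ (w 0) > ℓ (w T)) :
    ‖(K.orthogonalProjectionOnto (w T - w 0) : EuclideanSpace ℝ (Fin p))‖ ^ 2 / ‖w T - w 0‖ ^ 2
      ≤ (T : ℝ) * G ^ 2 * L ^ 2 / (ℓ (w 0) - ℓ (w T)) := by
  set D : ℝ := ℓ (w 0) - ℓ (w T) with hD
  have hDpos : 0 < D := sub_pos.mpr hdec
  set n : ℝ := ‖w T - w 0‖ with hn
  set N : ℝ := ‖(K.orthogonalProjectionOnto (w T - w 0) : EuclideanSpace ℝ (Fin p))‖ with hN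
  have hLn : D ≤ L * n := by
    have h := hlip (w T) (w 0)
    have : D ≤ |ℓ (w T) - ℓ (w 0)| := by
      rw [abs_sub_comm]; exact le_abs_self _
    exact this.trans h
  have hnnonneg : 0 ≤ n := norm_nonneg _
  have hnpos : 0 < n := by
    rcases hnnonneg.lt_or_eq with h | h
    · exact h
    · exfalso; rw [← h] at hLn; simp at hLn; linarith
  -- telescoping
  have htel : w T - w 0 = ∑ t ∈ Finset.range T, (w (t + 1) - w t) :=
    (Finset.sum_range_sub w T).symm
  have hNle : N ≤ ∑ t ∈ Finset.range T,
      ‖(K.orthogonalProjectionOnto (w (t + 1) - w t) : EuclideanSpace ℝ (Fin p))‖ := by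
    rw [hN, htel, map_sum]
    calc ‖((∑ t ∈ Finset.range T, K.orthogonalProjectionOnto (w (t + 1) - w t) : K) :
          EuclideanSpace ℝ (Fin p))‖
        = ‖∑ t ∈ Finset.range T,
            ((K.orthogonalProjectionOnto (w (t + 1) - w t) : EuclideanSpace ℝ (Fin p)))‖ := by
          norm_cast
      _ ≤ _ := norm_sum_le _ _
  have hsumsq : ∑ t ∈ Finset.range T,
      ‖(K.orthogonalProjectionOnto (w (t + 1) - w t) : EuclideanSpace ℝ (Fin p))‖ ^ 2
      ≤ G ^ 2 * D := by
    have h1 : ∑ t ∈ Finset.range T,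
        ‖(K.orthogonalProjectionOnto (w (t + 1) - w t) : EuclideanSpace ℝ (Fin p))‖ ^ 2
        ≤ ∑ t ∈ Finset.range T, G ^ 2 * (ℓ (w t) - ℓ (w (t + 1))) :=
      Finset.sum_le_sum fun t ht => hstep t (Finset.mem_range.mp ht)
    have h2 : ∑ t ∈ Finset.range T, G ^ 2 * (ℓ (w t) - ℓ (w (t + 1))) = G ^ 2 * D := by
      rw [← Finset.mul_sum, Finset.sum_range_sub' (fun t => ℓ (w t))]
    linarith
  have hNsq : N ^ 2 ≤ (T : ℝ) * (G ^ 2 * D) := by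
    have h0 : 0 ≤ N := norm_nonneg _
    have h1 : N ^ 2 ≤ (∑ t ∈ Finset.range T,
        ‖(K.orthogonalProjectionOnto (w (t + 1) - w t) : EuclideanSpace ℝ (Fin p))‖) ^ 2 :=
      pow_le_pow_left₀ h0 hNle 2
    have h2 := sq_sum_le_card_mul_sum_sq
      (s := Finset.range T)
      (f := fun t => ‖(K.orthogonalProjectionOnto (w (t + 1) - w t) : EuclideanSpace ℝ (Fin p))‖)
    rw [Finset.card_range] at h2
    have hT0 : (0 : ℝ) ≤ (T : ℝ) := Nat.cast_nonneg T
    calc N ^ 2 ≤ _ := h1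
      _ ≤ (T : ℝ) * ∑ t ∈ Finset.range T,
          ‖(K.orthogonalProjectionOnto (w (t + 1) - w t) : EuclideanSpace ℝ (Fin p))‖ ^ 2 := h2
      _ ≤ (T : ℝ) * (G ^ 2 * D) := by
          exact mul_le_mul_of_nonneg_left hsumsq hT0
  -- conclude
  have hG2 : (0 : ℝ) ≤ G ^ 2 := sq_nonneg G
  have hT0 : (0 : ℝ) ≤ (T : ℝ) := Nat.cast_nonneg T
  rw [div_le_div_iff₀ (by positivity) hDpos]
  nlinarith [sq_nonneg N, mul_nonneg hT0 hG2, sq_nonneg (L * n - D),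
    mul_nonneg (mul_nonneg hT0 hG2) (mul_pos hDpos hDpos).le,
    mul_le_mul_of_nonneg_left (mul_le_mul hLn hLn hDpos.le (by nlinarith)) (mul_nonneg hT0 hG2),
    mul_le_mul_of_nonneg_right hNsq hDpos.le]
end

section
/- Let {w_t}_{t=0}^T be a gradient descent path in ℝᵖ on a β-smooth (β-Lipschitz gradient) function ℓ with step size η satisfying ηβ < 2, and let ℓ be L-Lipschitz. Suppose there exist 0 ≤ G₂ ≤ 1 and an orthogonal projection P₂ onto a subspace with ‖P₂∇ℓ(w)‖² ≥ (1 − G₂²)‖∇ℓ(w)‖² for all w, and suppose ℓ(w_0) > ℓ(w_T). Then, with G²(η, β) := G₂²η/(1 − ηβ/2), it holds that ‖P₂⊥(w_T − w_0)‖²/‖w_T − w_0‖² ≤ T·G²(η, β)·L²/(ℓ(w_0) − ℓ(w_T)), where P₂⊥ = I − P₂. -/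
open scoped RealInnerProductSpace

-- descent lemma
lemma descent_aux {E : Type*} [NormedAddCommGroup E] [InnerProductSpace ℝ E] [CompleteSpace E]
    (f : E → ℝ) (β : ℝ) (hdiff : Differentiable ℝ f)
    (hlip : ∀ a b : E, ‖gradient f a - gradient f b‖ ≤ β * ‖a - b‖) (x y : E) :
    f y ≤ f x + ⟪gradient f x, y - x⟫ + β / 2 * ‖y - x‖ ^ 2 := by
  set v := y - x with hv
  set φ : ℝ → ℝ := fun t => f (x + t • v) - t * ⟪gradient f x, v⟫ - β / 2 * t ^ 2 * ‖v‖ ^ 2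
    with hφ
  have hderiv : ∀ t : ℝ, HasDerivAt φ
      (⟪gradient f (x + t • v), v⟫ - ⟪gradient f x, v⟫ - β * t * ‖v‖ ^ 2) t := by
    intro t
    have hc : HasDerivAt (fun t : ℝ => x + t • v) v t := by
      simpa using ((hasDerivAt_id t).smul_const v).const_add x
    have hf : HasDerivAt (fun t : ℝ => f (x + t • v)) ⟪gradient f (x + t • v), v⟫ t := by
      have := ((hdiff (x + t • v)).hasGradientAt.hasFDerivAt).comp_hasDerivAt t hc
      simpa [InnerProductSpace.toDual_apply_apply, Function.comp_def] using this
    have h2 : HasDerivAt (fun t : ℝ => t * ⟪gradient f x, v⟫) ⟪gradient f x, v⟫ t := by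
      simpa using (hasDerivAt_id t).mul_const ⟪gradient f x, v⟫
    have h3 : HasDerivAt (fun t : ℝ => β / 2 * t ^ 2 * ‖v‖ ^ 2) (β * t * ‖v‖ ^ 2) t := by
      have := ((hasDerivAt_pow 2 t).const_mul (β / 2)).mul_const (‖v‖ ^ 2)
      convert this using 1
      exacts [rfl, rfl, by simp only [Nat.cast_ofNat, Nat.add_one_sub_one, pow_one]; ring]
    exact (hf.sub h2).sub h3
  have hmono : AntitoneOn φ (Set.Icc 0 1) := by
    apply antitoneOn_of_deriv_nonpos (convex_Icc 0 1)
    · exact fun t _ => (hderiv t).continuousAt.continuousWithinAt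
    · exact fun t _ => (hderiv t).differentiableAt.differentiableWithinAt
    · intro t ht
      rw [interior_Icc] at ht
      rw [(hderiv t).deriv]
      have h1 : ⟪gradient f (x + t • v), v⟫ - ⟪gradient f x, v⟫
          = ⟪gradient f (x + t • v) - gradient f x, v⟫ := by
        rw [inner_sub_left]
      have h2 : ⟪gradient f (x + t • v) - gradient f x, v⟫ ≤ β * t * ‖v‖ ^ 2 := by
        calc ⟪gradient f (x + t • v) - gradient f x, v⟫
            ≤ ‖gradient f (x + t • v) - gradient f x‖ * ‖v‖ := real_inner_le_norm _ _
          _ ≤ (β * ‖(x + t • v) - x‖) * ‖v‖ := by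
              have := hlip (x + t • v) x
              nlinarith [norm_nonneg v]
          _ = β * t * ‖v‖ ^ 2 := by
              rw [add_sub_cancel_left, norm_smul]
              simp [abs_of_pos ht.1]
              ring
      linarith [h1 ▸ h2]
  have := hmono (Set.left_mem_Icc.2 one_pos.le) (Set.right_mem_Icc.2 one_pos.le) one_pos.le
  simp only [hφ] at this
  simp only [zero_smul, add_zero, zero_mul, zero_pow, sub_zero] at this
  have h1 : x + (1:ℝ) • v = y := by rw [hv]; simp
  rw [h1] at this
  linarith [this]

set_option maxHeartbeats 1600000 in
/-- Core quantitative step of Theorem 4.2: bound on the out-of-subspace fraction of the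
total gradient-descent update. -/
theorem stmt_19 {p : ℕ} (ℓ : EuclideanSpace ℝ (Fin p) → ℝ) (β η L G₂ : ℝ)
    (hη : 0 < η) (hβη : η * β < 2)
    (hdiff : Differentiable ℝ ℓ)
    (hgradlip : ∀ a b : EuclideanSpace ℝ (Fin p),
      ‖gradient ℓ a - gradient ℓ b‖ ≤ β * ‖a - b‖)
    (hL : 0 ≤ L)
    (hlip : ∀ w v : EuclideanSpace ℝ (Fin p), |ℓ w - ℓ v| ≤ L * ‖w - v‖)
    (hG0 : 0 ≤ G₂) (hG1 : G₂ ≤ 1)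
    (K : Submodule ℝ (EuclideanSpace ℝ (Fin p)))
    (hlow : ∀ w : EuclideanSpace ℝ (Fin p),
      ‖(Submodule.orthogonalProjectionOnto K (gradient ℓ w) : EuclideanSpace ℝ (Fin p))‖ ^ 2
        ≥ (1 - G₂ ^ 2) * ‖gradient ℓ w‖ ^ 2)
    (T : ℕ) (w : ℕ → EuclideanSpace ℝ (Fin p))
    (hstep : ∀ t, w (t + 1) = w t - η • gradient ℓ (w t))
    (hdec : ℓ (w 0) > ℓ (w T)) :
    ‖(Submodule.orthogonalProjectionOnto Kᗮ (w T - w 0) : EuclideanSpace ℝ (Fin p))‖ ^ 2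
        / ‖w T - w 0‖ ^ 2
      ≤ (T : ℝ) * (G₂ ^ 2 * η / (1 - η * β / 2)) * L ^ 2 / (ℓ (w 0) - ℓ (w T)) := by
  set g : ℕ → EuclideanSpace ℝ (Fin p) := fun t => gradient ℓ (w t) with hg
  set c : ℝ := η * (1 - η * β / 2) with hc
  have hc0 : 0 < c := by
    apply mul_pos hη; linarith
  set D : ℝ := ℓ (w 0) - ℓ (w T) with hD
  have hD0 : 0 < D := by simp [hD]; linarith [hdec]
  -- per-step descent
  have hstep_desc : ∀ t : ℕ, c * ‖g t‖ ^ 2 ≤ ℓ (w t) - ℓ (w (t + 1)) := by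
    intro t
    have := descent_aux ℓ β hdiff hgradlip (w t) (w (t + 1))
    have hdiffv : w (t + 1) - w t = -(η • g t) := by rw [hstep t]; abel
    rw [hdiffv] at this
    rw [inner_neg_right, inner_smul_right] at this
    have hip : (inner ℝ (gradient ℓ (w t)) (g t) : ℝ) = ‖g t‖ ^ 2 := by
      rw [hg]; exact real_inner_self_eq_norm_sq _
    rw [hip] at this
    rw [norm_neg, norm_smul] at this
    rw [Real.norm_eq_abs, abs_of_pos hη] at this
    nlinarith [this]
  -- telescoping sum
  have hsum : c * ∑ t ∈ Finset.range T, ‖g t‖ ^ 2 ≤ D := by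
    rw [Finset.mul_sum]
    calc ∑ t ∈ Finset.range T, c * ‖g t‖ ^ 2
        ≤ ∑ t ∈ Finset.range T, (ℓ (w t) - ℓ (w (t + 1))) :=
          Finset.sum_le_sum fun t _ => hstep_desc t
      _ = ℓ (w 0) - ℓ (w T) := Finset.sum_range_sub' (fun t => ℓ (w t)) T
  set S : ℝ := ∑ t ∈ Finset.range T, ‖g t‖ ^ 2 with hS
  have hS0 : 0 ≤ S := Finset.sum_nonneg fun t _ => sq_nonneg _
  -- projection bound per gradient
  have hproj : ∀ t : ℕ,
      ‖(Submodule.orthogonalProjectionOnto Kᗮ (g t) : EuclideanSpace ℝ (Fin p))‖ ^ 2 ≤ G₂ ^ 2 * ‖g t‖ ^ 2 := by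
    intro t
    have h1 := Submodule.norm_sq_eq_add_norm_sq_projection (g t) K
    have h2 : ‖(Submodule.orthogonalProjectionOnto K (g t) : EuclideanSpace ℝ (Fin p))‖ ^ 2
        ≥ (1 - G₂ ^ 2) * ‖g t‖ ^ 2 := hlow (w t)
    simp only [Submodule.norm_coe] at h1 h2 ⊢
    nlinarith [h1, h2, sq_nonneg ‖g t‖]
  -- decomposition of wT - w0
  have hdecomp : w T - w 0 = ∑ t ∈ Finset.range T, (-η) • g t := by
    have : ∀ t : ℕ, w (t + 1) - w t = (-η) • g t := by
      intro t; rw [hstep t]; rw [neg_smul]; abel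
    calc w T - w 0 = ∑ t ∈ Finset.range T, (w (t + 1) - w t) :=
          (Finset.sum_range_sub (fun t => w t) T).symm
      _ = ∑ t ∈ Finset.range T, (-η) • g t := Finset.sum_congr rfl fun t _ => this t
  -- norm of projected displacement
  set N : ℝ := ‖(Submodule.orthogonalProjectionOnto Kᗮ (w T - w 0) : EuclideanSpace ℝ (Fin p))‖ with hN
  have hNbound : N ≤ η * ∑ t ∈ Finset.range T, ‖(Submodule.orthogonalProjectionOnto Kᗮ (g t) :
      EuclideanSpace ℝ (Fin p))‖ := by
    rw [hN, hdecomp, map_sum]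
    calc ‖(∑ t ∈ Finset.range T, Submodule.orthogonalProjectionOnto Kᗮ ((-η) • g t) : Kᗮ)‖
        ≤ ∑ t ∈ Finset.range T, ‖Submodule.orthogonalProjectionOnto Kᗮ ((-η) • g t)‖ :=
          norm_sum_le _ _
      _ = ∑ t ∈ Finset.range T, η * ‖(Submodule.orthogonalProjectionOnto Kᗮ (g t) :
          EuclideanSpace ℝ (Fin p))‖ := by
          apply Finset.sum_congr rfl; intro t _
          rw [map_smul, norm_smul]
          simp [abs_of_pos hη]
      _ = η * ∑ t ∈ Finset.range T, ‖(Submodule.orthogonalProjectionOnto Kᗮ (g t) :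
          EuclideanSpace ℝ (Fin p))‖ := (Finset.mul_sum _ _ _).symm
  -- Cauchy-Schwarz on the sum
  have hCS : (∑ t ∈ Finset.range T, ‖(Submodule.orthogonalProjectionOnto Kᗮ (g t) :
      EuclideanSpace ℝ (Fin p))‖) ^ 2
      ≤ (T : ℝ) * ∑ t ∈ Finset.range T, ‖(Submodule.orthogonalProjectionOnto Kᗮ (g t) :
      EuclideanSpace ℝ (Fin p))‖ ^ 2 := by
    simpa using sq_sum_le_card_mul_sum_sq (s := Finset.range T)
      (f := fun t => ‖(Submodule.orthogonalProjectionOnto Kᗮ (g t) : EuclideanSpace ℝ (Fin p))‖)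
  -- sum of squared projected gradients bound
  have hsumproj : ∑ t ∈ Finset.range T, ‖(Submodule.orthogonalProjectionOnto Kᗮ (g t) :
      EuclideanSpace ℝ (Fin p))‖ ^ 2 ≤ G₂ ^ 2 * S := by
    rw [hS, Finset.mul_sum]
    exact Finset.sum_le_sum fun t _ => hproj t
  set q : ℝ := 1 - η * β / 2 with hq
  have hq0 : 0 < q := by rw [hq]; linarith
  set A : ℝ := (T : ℝ) * (G₂ ^ 2 * η / q) with hA
  have hA0 : 0 ≤ A := by
    apply mul_nonneg (Nat.cast_nonneg T)
    positivity
  have hN0 : 0 ≤ N := norm_nonneg _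
  -- N^2 ≤ A * D
  have hNsq : N ^ 2 ≤ A * D := by
    have hSle : S ≤ D / c := by
      rw [le_div_iff₀ hc0]; linarith [hsum]
    have h1 : N ^ 2 ≤ (η * ∑ t ∈ Finset.range T, ‖(Submodule.orthogonalProjectionOnto Kᗮ (g t) :
        EuclideanSpace ℝ (Fin p))‖) ^ 2 := by
      apply pow_le_pow_left₀ hN0 hNbound
    have h2 : (η * ∑ t ∈ Finset.range T, ‖(Submodule.orthogonalProjectionOnto Kᗮ (g t) :
        EuclideanSpace ℝ (Fin p))‖) ^ 2
        = η ^ 2 * (∑ t ∈ Finset.range T, ‖(Submodule.orthogonalProjectionOnto Kᗮ (g t) :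
        EuclideanSpace ℝ (Fin p))‖) ^ 2 := by ring
    have h3 : η ^ 2 * (∑ t ∈ Finset.range T, ‖(Submodule.orthogonalProjectionOnto Kᗮ (g t) :
        EuclideanSpace ℝ (Fin p))‖) ^ 2
        ≤ η ^ 2 * ((T : ℝ) * (G₂ ^ 2 * S)) := by
      apply mul_le_mul_of_nonneg_left _ (sq_nonneg η)
      calc (∑ t ∈ Finset.range T, ‖(Submodule.orthogonalProjectionOnto Kᗮ (g t) :
          EuclideanSpace ℝ (Fin p))‖) ^ 2
          ≤ (T : ℝ) * ∑ t ∈ Finset.range T, ‖(Submodule.orthogonalProjectionOnto Kᗮ (g t) :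
            EuclideanSpace ℝ (Fin p))‖ ^ 2 := hCS
        _ ≤ (T : ℝ) * (G₂ ^ 2 * S) :=
            mul_le_mul_of_nonneg_left hsumproj (Nat.cast_nonneg T)
    have h4 : η ^ 2 * ((T : ℝ) * (G₂ ^ 2 * S)) ≤ η ^ 2 * ((T : ℝ) * (G₂ ^ 2 * (D / c))) := by
      apply mul_le_mul_of_nonneg_left _ (sq_nonneg η)
      apply mul_le_mul_of_nonneg_left _ (Nat.cast_nonneg T)
      exact mul_le_mul_of_nonneg_left hSle (sq_nonneg G₂)
    have h5 : η ^ 2 * ((T : ℝ) * (G₂ ^ 2 * (D / c))) = A * D := by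
      rw [hA, hc]
      field_simp
    calc N ^ 2 ≤ _ := h1
      _ = _ := h2
      _ ≤ _ := h3
      _ ≤ _ := h4
      _ = A * D := h5
  -- Lipschitz lower bound on displacement
  set n : ℝ := ‖w T - w 0‖ with hn
  have hlb : D ≤ L * n := by
    have := hlip (w 0) (w T)
    rw [← norm_sub_rev (w T) (w 0)] at this
    calc D ≤ |ℓ (w 0) - ℓ (w T)| := le_abs_self _
      _ ≤ L * n := this
  have hn0 : 0 < n := by
    by_contra h
    push_neg at h
    have : L * n ≤ 0 := mul_nonpos_of_nonneg_of_nonpos hL h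
    linarith
  -- conclude
  rw [div_le_div_iff₀ (by positivity) hD0]
  have hDsq : D * D ≤ (L * n) * (L * n) := mul_self_le_mul_self hD0.le hlb
  nlinarith [hNsq, hDsq, hA0, hD0, mul_le_mul_of_nonneg_left hDsq hA0,
    mul_le_mul_of_nonneg_right hNsq hD0.le]
end
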